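/- Let μ be a reconciliation map from (T;t,σ) to S. There is a time-consistent reconciliation map from (T;t,σ) to S if and only if there exists a time map τ_T for T alone satisfying: (T1) for u,v with t(u)=t(v) ∈ {•,⊙}: μ(u)=μ(v) implies τ_T(u)=τ_T(v), and μ(u) ≺_S μ(v) implies τ_T(u) > τ_T(v); (T2) if t(u) ∈ {•,⊙}, t(v) ∈ {□,△} and μ(u) ⪯_S lca_S(σ_{T̄}(v)), then τ_T(u) > τ_T(v); (T3) if (u,v) is a transfer edge and lca_S(σ_{T̄}(u) ∪ σ_{T̄}(v)) ⪯_S lca_S(σ_{T̄}(w)) for some w ∈ V(T), then τ_T(u) > τ_T(w). -/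

import Mathlib

/-- A rooted tree on vertex type `V`, encoded by a parent map.
Edges are directed away from the root; the edge into a non-root vertex `v`
is `(par v, v)`. -/
structure RTree (V : Type*) where
  root : V
  par : V → V
  par_root : par root = root
  par_ne : ∀ v, v ≠ root → par v ≠ v
  reaches : ∀ v, ∃ k, par^[k] v = root

namespace RTree

variable {V : Type*}

/-- `anc T x y` : `x` is a descendant of `y`, i.e. `x ⪯_T y`. -/
def anc (T : RTree V) (x y : V) : Prop := ∃ k, (T.par)^[k] x = y

/-- strict descendant: `x ≺_T y`. -/
def sanc (T : RTree V) (x y : V) : Prop := T.anc x y ∧ x ≠ y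

def IsLeaf (T : RTree V) (v : V) : Prop := ∀ u, T.par u = v → u = v

/-- `x` is a least common ancestor of the set `A`. -/
def IsLca (T : RTree V) (A : Set V) (x : V) : Prop :=
  (∀ a ∈ A, T.anc a x) ∧ ∀ y, (∀ a ∈ A, T.anc a y) → T.anc x y

/-- A time map: strict descendants have strictly larger time stamps. -/
def IsTimeMap (T : RTree V) (τ : V → ℝ) : Prop :=
  ∀ x y, T.sanc x y → τ y < τ x

end RTree

/-- Event labels: speciation `•`, duplication `□`, HGT `△`, leaf `⊙`. -/
inductive Event where
  | spec | dup | hgt | leaf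
deriving DecidableEq

/-- The common setup: a gene tree `T` (vertices `V`) with event labels `t`,
transfer edges `trans` (an edge is recorded by its child endpoint),
a species tree `S` (vertices `W`), the map `sig = σ` assigning to each gene
(leaf of `T`) the species (leaf of `S`) it resides in, and a least common
ancestor function `lca` on the species tree. -/
structure ReconSetup (V W : Type*) where
  T : RTree V
  S : RTree W
  t : V → Event
  trans : Set V
  sig : V → W
  lca : Set W → W
  trans_ne_root : ∀ v ∈ trans, v ≠ T.root
  trans_hgt : ∀ v ∈ trans, t (T.par v) = Event.hgt
  leaf_iff : ∀ v, T.IsLeaf v ↔ t v = Event.leaf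
  sig_leaf : ∀ v, T.IsLeaf v → S.IsLeaf (sig v)
  lca_spec : ∀ A : Set W, A.Nonempty → S.IsLca A (lca A)

/-- lower endpoint of a vertex-or-edge of the species tree
(an edge `(S.par y, y)` is encoded as `Sum.inr y`; a vertex `x` as `Sum.inl x`). -/
def lowPt {W : Type*} : W ⊕ W → W := Sum.elim id id

namespace ReconSetup

variable {V W : Type*}

/-- ancestor order of the forest `T_{E̅}` obtained by deleting transfer edges. -/
def fanc (R : ReconSetup V W) (x y : V) : Prop :=
  ∃ k, (R.T.par)^[k] x = y ∧ ∀ i < k, (R.T.par)^[i] x ∉ R.trans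

def sfanc (R : ReconSetup V W) (x y : V) : Prop := R.fanc x y ∧ x ≠ y

/-- `σ_{T̅}(u)`: the species of the leaves of `T` below `u` in the forest `T_{E̅}`. -/
def sigmaBar (R : ReconSetup V W) (u : V) : Set W :=
  R.sig '' {l | R.T.IsLeaf l ∧ R.fanc l u}

/-- Ancestor order of `S` extended to vertices and edges:
`z ⪯ (x,y) ↔ z ⪯ y`, `(x,y) ⪯ z ↔ x ⪯ z`, `(x,y) ⪯ (a,b) ↔ y ⪯ b`. -/
def extLE (R : ReconSetup V W) : W ⊕ W → W ⊕ W → Prop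
  | Sum.inl a, Sum.inl b => R.S.anc a b
  | Sum.inl a, Sum.inr y => R.S.anc a y
  | Sum.inr y, Sum.inl b => R.S.anc (R.S.par y) b
  | Sum.inr y, Sum.inr z => R.S.anc y z

def extLT (R : ReconSetup V W) (p q : W ⊕ W) : Prop := R.extLE p q ∧ ¬ R.extLE q p

def incomp (R : ReconSetup V W) (p q : W ⊕ W) : Prop := ¬ R.extLE p q ∧ ¬ R.extLE q p

def IsDupHGT (R : ReconSetup V W) (u : V) : Prop :=
  R.t u = Event.dup ∨ R.t u = Event.hgt

/-- (M1) leaf constraint. -/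
def M1 (R : ReconSetup V W) (μ : V → W ⊕ W) : Prop :=
  ∀ u, R.T.IsLeaf u → μ u = Sum.inl (R.sig u)

/-- (M2i) speciation vertices map to the lca of the species below them. -/
def M2i (R : ReconSetup V W) (μ : V → W ⊕ W) : Prop :=
  ∀ u, R.t u = Event.spec → μ u = Sum.inl (R.lca (R.sigmaBar u))

/-- (M2ii) duplication/HGT vertices map to edges of `S`. -/
def M2ii (R : ReconSetup V W) (μ : V → W ⊕ W) : Prop :=
  ∀ u, R.IsDupHGT u → ∃ y, y ≠ R.S.root ∧ μ u = Sum.inr y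

/-- (M2iii) the endpoints of a transfer edge receive incomparable images. -/
def M2iii (R : ReconSetup V W) (μ : V → W ⊕ W) : Prop :=
  ∀ v ∈ R.trans, R.incomp (μ (R.T.par v)) (μ v)

/-- (M3) ancestor constraint within components of `T_{E̅}`. -/
def M3 (R : ReconSetup V W) (μ : V → W ⊕ W) : Prop :=
  ∀ v w, R.sfanc v w →
    ((R.IsDupHGT v ∧ R.IsDupHGT w) → R.extLE (μ v) (μ w)) ∧
    (¬ (R.IsDupHGT v ∧ R.IsDupHGT w) → R.extLT (μ v) (μ w))

/-- `μ` is a reconciliation map from `(T;t,σ)` to `S`. -/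
def IsRecon (R : ReconSetup V W) (μ : V → W ⊕ W) : Prop :=
  R.M1 μ ∧ R.M2i μ ∧ R.M2ii μ ∧ R.M2iii μ ∧ R.M3 μ

/-- (O1) every internal vertex has at least two children. -/
def O1 (R : ReconSetup V W) : Prop :=
  ∀ v, ¬ R.T.IsLeaf v →
    ∃ a b, a ≠ b ∧ R.T.par a = v ∧ R.T.par b = v ∧ a ≠ v ∧ b ≠ v

/-- (O2) every HGT vertex has a transfer child edge and a non-transfer child edge. -/
def O2 (R : ReconSetup V W) : Prop :=
  ∀ v, R.t v = Event.hgt →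
    (∃ c, R.T.par c = v ∧ c ∈ R.trans) ∧ (∃ c, R.T.par c = v ∧ c ≠ v ∧ c ∉ R.trans)

/-- (Σ1) a speciation vertex has two children whose species sets are disjoint. -/
def Sigma1 (R : ReconSetup V W) : Prop :=
  ∀ x, R.t x = Event.spec →
    ∃ v w, v ≠ w ∧ R.T.par v = x ∧ R.T.par w = x ∧ v ≠ x ∧ w ≠ x ∧
      R.sigmaBar v ∩ R.sigmaBar w = ∅

/-- (Σ2) the species sets across a transfer edge are disjoint. -/
def Sigma2 (R : ReconSetup V W) : Prop :=
  ∀ w ∈ R.trans, R.sigmaBar (R.T.par w) ∩ R.sigmaBar w = ∅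

/-- the gene tree is binary. -/
def BinaryT (R : ReconSetup V W) : Prop :=
  ∀ v, ¬ R.T.IsLeaf v →
    ∃ a b, a ≠ b ∧ ∀ c, (R.T.par c = v ∧ c ≠ v) ↔ (c = a ∨ c = b)

/-- the species tree is binary. -/
def BinaryS (R : ReconSetup V W) : Prop :=
  ∀ v, ¬ R.S.IsLeaf v →
    ∃ a b, a ≠ b ∧ ∀ c, (R.S.par c = v ∧ c ≠ v) ↔ (c = a ∨ c = b)

/-- (C1) speciation vertices and leaves get the same time as their image. -/
def C1 (R : ReconSetup V W) (μ : V → W ⊕ W) (τT : V → ℝ) (τS : W → ℝ) : Prop :=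
  ∀ u x, (R.t u = Event.spec ∨ R.t u = Event.leaf) → μ u = Sum.inl x → τT u = τS x

/-- (C2) a vertex mapped into an edge `(x,y)` gets a time strictly between
the times of `x` and `y`. -/
def C2 (R : ReconSetup V W) (μ : V → W ⊕ W) (τT : V → ℝ) (τS : W → ℝ) : Prop :=
  ∀ u y, R.IsDupHGT u → μ u = Sum.inr y → τS (R.S.par y) < τT u ∧ τT u < τS y

/-- `μ` is a time-consistent reconciliation map. -/
def TimeConsistent (R : ReconSetup V W) (μ : V → W ⊕ W) : Prop :=
  ∃ τT τS, R.T.IsTimeMap τT ∧ R.S.IsTimeMap τS ∧ R.C1 μ τT τS ∧ R.C2 μ τT τS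

/-- (D1). -/
def D1 (R : ReconSetup V W) (μ : V → W ⊕ W) (τT : V → ℝ) (τS : W → ℝ) : Prop :=
  ∀ u x, μ u = Sum.inl x → τT u = τS x

/-- (D2). -/
def D2 (R : ReconSetup V W) (τT : V → ℝ) (τS : W → ℝ) : Prop :=
  ∀ u x, R.IsDupHGT u → R.S.anc x (R.lca (R.sigmaBar u)) → τT u < τS x

/-- (D3), for a transfer edge `(T.par v, v)` with `v ∈ trans`. -/
def D3 (R : ReconSetup V W) (τT : V → ℝ) (τS : W → ℝ) : Prop :=
  ∀ v x, v ∈ R.trans →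
    R.S.anc (R.lca (R.sigmaBar (R.T.par v) ∪ R.sigmaBar v)) x → τS x < τT (R.T.par v)

/-- The DTL-scenario axioms (I)-(IV) for a map `γ : V(T) → V(S)`. -/
def DTL (R : ReconSetup V W) (γ : V → W) : Prop :=
  (∀ u, R.T.IsLeaf u → γ u = R.sig u) ∧
  (∀ u v w, v ≠ w → R.T.par v = u → R.T.par w = u → v ≠ u → w ≠ u →
    ((¬ R.S.sanc (γ u) (γ v) ∧ ¬ R.S.sanc (γ u) (γ w)) ∧
     (R.S.anc (γ v) (γ u) ∨ R.S.anc (γ w) (γ u)))) ∧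
  (∀ v, v ≠ R.T.root →
    (v ∈ R.trans ↔ (¬ R.S.anc (γ (R.T.par v)) (γ v) ∧ ¬ R.S.anc (γ v) (γ (R.T.par v))))) ∧
  (∀ u v w, v ≠ w → R.T.par v = u → R.T.par w = u → v ≠ u → w ≠ u →
    ((R.t u = Event.hgt ↔ (v ∈ R.trans ∨ w ∈ R.trans)) ∧
     (R.t u = Event.spec →
       γ u = R.lca {γ v, γ w} ∧ ¬ R.S.anc (γ v) (γ w) ∧ ¬ R.S.anc (γ w) (γ v)) ∧
     (R.t u = Event.dup → R.S.anc (R.lca {γ v, γ w}) (γ u))))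

end ReconSetup

/-- A directed graph (relation) is acyclic: no edge closes a directed cycle. -/
def Acyclic {α : Type*} (r : α → α → Prop) : Prop :=
  ∀ x y, r x y → ¬ Relation.ReflTransGen r y x

/-! Necessity: (C1) and (C2) put each gene vertex at a time inside its image in `S`, and
(T1)-(T3) are read off along the ancestor order of `S`.

Sufficiency: give each species vertex `x` the potential "earliest `τ_T`-time of a gene
event that (T1)-(T3) force at or below `x`" (`-∞` at the root), break ties by depth, and give
a duplication/HGT vertex its `τ_T`-time. This potential increases along every constraint:
parent to child in `S` and in `T` (speciations and leaves standing for their species vertex),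
`u` to `lca_S(σ_{T̄}(u))` for a duplication/HGT vertex `u`, and
`lca_S(σ_{T̄}(u) ∪ σ_{T̄}(v))` to `u` for a transfer edge `(u,v)`. Ranking by it gives injective
time stamps on both trees. Each duplication/HGT vertex is then put on the edge above
`lca_S(σ_{T̄}(u))` whose time interval contains its stamp; as positions in `S` are ordered like
their time stamps, (M2iii) and (M3) follow. -/

theorem exists_injective_real_ranking {α β : Type*} [Finite α] [LinearOrder β]
    (f : α → β) : ∃ g : α → ℝ, Function.Injective g ∧ ∀ a b, f a < f b → g a < g b := by
  obtain ⟨e, he⟩ := Countable.exists_injective_nat α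
  let k : α → β ×ₗ ℕ := fun a => toLex (f a, e a)
  have hk : Function.Injective k := fun a b h => he (congrArg (fun p => (ofLex p).2) h)
  let g : α → ℝ := fun a => ({b | k b < k a}.ncard : ℝ)
  have hg : ∀ a b, k a < k b → g a < g b := fun a b h => Nat.cast_lt.mpr <|
    Set.ncard_lt_ncard ⟨fun c (hc : k c < k a) => hc.trans h,
      fun hsub => lt_irrefl (k a) (hsub (show k a < k b from h))⟩
  refine ⟨g, fun a b hab => ?_, fun a b h => hg a b (Prod.Lex.toLex_lt_toLex.mpr (Or.inl h))⟩
  by_contra hne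
  rcases lt_or_gt_of_ne (hk.ne hne) with h | h
  · exact (hg a b h).ne hab
  · exact (hg b a h).ne' hab

namespace RTree

variable {V : Type*} {T : RTree V} {x y z : V} {τ : V → ℝ}

theorem iterate_par_root (T : RTree V) (k : ℕ) : T.par^[k] T.root = T.root :=
  Function.iterate_fixed T.par_root k

theorem anc_refl (T : RTree V) (x : V) : T.anc x x := ⟨0, rfl⟩

theorem anc_par (T : RTree V) (x : V) : T.anc x (T.par x) := ⟨1, rfl⟩

theorem anc_root (T : RTree V) (x : V) : T.anc x T.root := T.reaches x

theorem anc_trans (h₁ : T.anc x y) (h₂ : T.anc y z) : T.anc x z := by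
  obtain ⟨k, rfl⟩ := h₁
  obtain ⟨j, rfl⟩ := h₂
  exact ⟨j + k, Function.iterate_add_apply _ _ _ _⟩

theorem eq_root_of_root_anc (h : T.anc T.root x) : x = T.root := by
  obtain ⟨k, rfl⟩ := h
  exact T.iterate_par_root k

theorem eq_root_of_isPeriodicPt {n : ℕ} (h : Function.IsPeriodicPt T.par n x) (hn : 0 < n) :
    x = T.root := by
  obtain ⟨m, hm⟩ := T.reaches x
  have hmn : m ≤ n * m := Nat.le_mul_of_pos_left m hn
  calc x = T.par^[n * m] x := (h.mul_const m).eq.symm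
    _ = T.par^[n * m - m] (T.par^[m] x) := by
      rw [← Function.iterate_add_apply, Nat.sub_add_cancel hmn]
    _ = T.root := by rw [hm, iterate_par_root]

theorem anc_antisymm (h₁ : T.anc x y) (h₂ : T.anc y x) : x = y := by
  obtain ⟨k, rfl⟩ := h₁
  obtain ⟨j, hj⟩ := h₂
  rcases Nat.eq_zero_or_pos (j + k) with h0 | hpos
  · obtain rfl : k = 0 := by omega
    rfl
  · obtain rfl := eq_root_of_isPeriodicPt ((Function.iterate_add_apply _ _ _ _).trans hj) hpos
    exact (T.iterate_par_root k).symm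

theorem anc_par_of_anc_of_ne (h : T.anc x y) (hne : x ≠ y) : T.anc (T.par x) y := by
  obtain ⟨_ | k, rfl⟩ := h
  · exact absurd rfl hne
  · exact ⟨k, (Function.iterate_succ_apply _ _ _).symm⟩

theorem anc_total (hx : T.anc z x) (hy : T.anc z y) : T.anc x y ∨ T.anc y x := by
  obtain ⟨j, rfl⟩ := hx
  obtain ⟨k, rfl⟩ := hy
  rcases le_total j k with h | h
  · exact Or.inl ⟨k - j, by rw [← Function.iterate_add_apply, Nat.sub_add_cancel h]⟩
  · exact Or.inr ⟨j - k, by rw [← Function.iterate_add_apply, Nat.sub_add_cancel h]⟩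

theorem IsLeaf.eq_of_anc (hx : T.IsLeaf x) (h : T.anc y x) : y = x := by
  obtain ⟨k, hk⟩ := h
  induction k generalizing y with
  | zero => exact hk
  | succ k ih =>
    rw [Function.iterate_succ_apply] at hk
    exact hx y (ih hk)

theorem not_isLeaf_par (hx : x ≠ T.root) : ¬ T.IsLeaf (T.par x) :=
  fun h => T.par_ne x hx (h x rfl).symm

theorem ncard_anc_lt [Finite V] (h : T.sanc x y) :
    {z | T.anc y z}.ncard < {z | T.anc x z}.ncard :=
  Set.ncard_lt_ncard
    ⟨fun _ hz => anc_trans h.1 hz, fun hsub => h.2 (anc_antisymm h.1 (hsub (T.anc_refl x)))⟩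

theorem ncard_desc_lt [Finite V] (h : T.sanc x y) :
    {z | T.anc z x}.ncard < {z | T.anc z y}.ncard :=
  Set.ncard_lt_ncard
    ⟨fun _ hz => anc_trans hz h.1, fun hsub => h.2 (anc_antisymm h.1 (hsub (T.anc_refl y)))⟩

theorem isTimeMap_of_par_lt (h : ∀ x, x ≠ T.root → τ (T.par x) < τ x) : T.IsTimeMap τ := by
  rintro x y ⟨⟨k, rfl⟩, hne⟩
  induction k generalizing x with
  | zero => exact absurd rfl hne
  | succ k ih =>
    have hx : x ≠ T.root := by
      rintro rfl
      exact hne (T.iterate_par_root _).symm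
    rw [Function.iterate_succ_apply]
    by_cases hp : T.par x = T.par^[k] (T.par x)
    · rw [← hp]
      exact h x hx
    · exact (ih _ hp).trans (h x hx)

theorem IsTimeMap.le_of_anc (hτ : T.IsTimeMap τ) (h : T.anc x y) : τ y ≤ τ x := by
  rcases eq_or_ne x y with rfl | hne
  · exact le_rfl
  · exact (hτ x y ⟨h, hne⟩).le

theorem IsTimeMap.anc_of_le (hτ : T.IsTimeMap τ) (hx : T.anc z x) (hy : T.anc z y)
    (h : τ y ≤ τ x) : T.anc x y := by
  rcases anc_total hx hy with hxy | hyx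
  · exact hxy
  rcases eq_or_ne y x with rfl | hne
  · exact T.anc_refl y
  · exact absurd (hτ y x ⟨hyx, hne⟩) (not_lt.mpr h)

theorem IsTimeMap.anc_of_par_lt (hτ : T.IsTimeMap τ) (hx : T.anc z x) (hy : T.anc z y)
    (h : τ (T.par y) < τ x) : T.anc x y := by
  rcases anc_total hx hy with hxy | hyx
  · exact hxy
  rcases eq_or_ne y x with rfl | hne
  · exact T.anc_refl y
  · exact absurd (hτ.le_of_anc (anc_par_of_anc_of_ne hyx hne)) (not_le.mpr h)

theorem exists_edge_of_lt {s : ℝ} (x : V) (hroot : τ T.root < s) (hx : s < τ x)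
    (hs : ∀ y, τ y ≠ s) :
    ∃ y, T.anc x y ∧ y ≠ T.root ∧ τ (T.par y) < s ∧ s < τ y := by
  obtain ⟨k, hk⟩ := T.reaches x
  induction k generalizing x with
  | zero => exact absurd (hk ▸ hx) (lt_asymm hroot)
  | succ k ih =>
    rcases lt_or_gt_of_ne (hs (T.par x)) with h | h
    · refine ⟨x, T.anc_refl x, ?_, h, hx⟩
      rintro rfl
      exact lt_asymm hroot hx
    · obtain ⟨y, hy, hy'⟩ := ih (T.par x) h (by rwa [← Function.iterate_succ_apply])
      exact ⟨y, anc_trans (T.anc_par x) hy, hy'⟩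

end RTree

namespace ReconSetup

open RTree

variable {V W : Type*} {R : ReconSetup V W} {u v w : V} {x y z : W}

theorem fanc_refl (R : ReconSetup V W) (u : V) : R.fanc u u :=
  ⟨0, rfl, fun _ h => absurd h (Nat.not_lt_zero _)⟩

theorem fanc_par (hu : u ∉ R.trans) : R.fanc u (R.T.par u) :=
  ⟨1, rfl, fun i hi => by rwa [Nat.lt_one_iff.mp hi]⟩

theorem fanc_trans (h₁ : R.fanc u v) (h₂ : R.fanc v w) : R.fanc u w := by
  obtain ⟨k, rfl, hk⟩ := h₁
  obtain ⟨j, rfl, hj⟩ := h₂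
  refine ⟨j + k, Function.iterate_add_apply _ _ _ _, fun i hi => ?_⟩
  rcases lt_or_ge i k with h | h
  · exact hk i h
  · rw [← Nat.sub_add_cancel h, Function.iterate_add_apply]
    exact hj (i - k) (by omega)

theorem anc_of_fanc (h : R.fanc u v) : R.T.anc u v :=
  let ⟨k, hk, _⟩ := h
  ⟨k, hk⟩

theorem mem_sigmaBar_self (hu : R.T.IsLeaf u) : R.sig u ∈ R.sigmaBar u :=
  ⟨u, ⟨hu, R.fanc_refl u⟩, rfl⟩

theorem sigmaBar_of_isLeaf (hu : R.T.IsLeaf u) : R.sigmaBar u = {R.sig u} := by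
  refine Set.eq_singleton_iff_unique_mem.mpr ⟨mem_sigmaBar_self hu, ?_⟩
  rintro _ ⟨l, ⟨-, hl⟩, rfl⟩
  rw [hu.eq_of_anc (anc_of_fanc hl)]

theorem sigmaBar_mono (h : R.fanc u v) : R.sigmaBar u ⊆ R.sigmaBar v := by
  rintro _ ⟨l, ⟨hl, hlu⟩, rfl⟩
  exact ⟨l, ⟨hl, fanc_trans hlu h⟩, rfl⟩

theorem exists_child_not_mem_trans (hO1 : R.O1) (hO2 : R.O2) (hu : ¬ R.T.IsLeaf u) :
    ∃ c, R.T.par c = u ∧ c ≠ u ∧ c ∉ R.trans := by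
  by_cases ht : R.t u = Event.hgt
  · exact (hO2 u ht).2
  · obtain ⟨c, -, -, hc, -, hcu, -⟩ := hO1 u hu
    refine ⟨c, hc, hcu, fun hm => ht ?_⟩
    rw [← hc]
    exact R.trans_hgt c hm

theorem sigmaBar_nonempty [Finite V] (hO1 : R.O1) (hO2 : R.O2) (u : V) :
    (R.sigmaBar u).Nonempty := by
  by_cases hu : R.T.IsLeaf u
  · exact ⟨_, mem_sigmaBar_self hu⟩
  obtain ⟨c, hpar, hcu, hc⟩ := exists_child_not_mem_trans hO1 hO2 hu
  exact (sigmaBar_nonempty hO1 hO2 c).mono (hpar ▸ sigmaBar_mono (fanc_par hc))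
termination_by {x | R.T.anc x u}.ncard
decreasing_by exact ncard_desc_lt ⟨⟨1, hpar⟩, hcu⟩

theorem lca_singleton (R : ReconSetup V W) (x : W) : R.lca {x} = x := by
  have h := R.lca_spec {x} ⟨x, rfl⟩
  refine anc_antisymm (h.2 x ?_) (h.1 x rfl)
  rintro _ rfl
  exact R.S.anc_refl _

def lcaBar (R : ReconSetup V W) (u : V) : W := R.lca (R.sigmaBar u)

def transferLca (R : ReconSetup V W) (v : V) : W := R.lca (R.sigmaBar (R.T.par v) ∪ R.sigmaBar v)

theorem anc_lcaBar (hne : ∀ u, (R.sigmaBar u).Nonempty) (hx : x ∈ R.sigmaBar u) :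
    R.S.anc x (R.lcaBar u) :=
  (R.lca_spec _ (hne u)).1 x hx

theorem lcaBar_anc (hne : ∀ u, (R.sigmaBar u).Nonempty)
    (h : ∀ x ∈ R.sigmaBar u, R.S.anc x y) :
    R.S.anc (R.lcaBar u) y :=
  (R.lca_spec _ (hne u)).2 y h

theorem lcaBar_mono (hne : ∀ u, (R.sigmaBar u).Nonempty) (h : R.fanc u v) :
    R.S.anc (R.lcaBar u) (R.lcaBar v) :=
  lcaBar_anc hne fun _ hx => anc_lcaBar hne (sigmaBar_mono h hx)

theorem lcaBar_par_anc_transferLca (hne : ∀ u, (R.sigmaBar u).Nonempty) (v : V) :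
    R.S.anc (R.lcaBar (R.T.par v)) (R.transferLca v) :=
  lcaBar_anc hne fun x hx => (R.lca_spec _ ((hne _).mono Set.subset_union_left)).1 x (Or.inl hx)

theorem lcaBar_anc_transferLca (hne : ∀ u, (R.sigmaBar u).Nonempty) (v : V) :
    R.S.anc (R.lcaBar v) (R.transferLca v) :=
  lcaBar_anc hne fun x hx => (R.lca_spec _ ((hne _).mono Set.subset_union_left)).1 x (Or.inr hx)

theorem transferLca_anc (hne : ∀ u, (R.sigmaBar u).Nonempty)
    (h₁ : R.S.anc (R.lcaBar (R.T.par v)) y)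
    (h₂ : R.S.anc (R.lcaBar v) y) : R.S.anc (R.transferLca v) y := by
  refine (R.lca_spec _ ((hne _).mono Set.subset_union_left)).2 y ?_
  rintro x (hx | hx)
  · exact anc_trans (anc_lcaBar hne hx) h₁
  · exact anc_trans (anc_lcaBar hne hx) h₂

theorem lcaBar_of_isLeaf (hu : R.T.IsLeaf u) : R.lcaBar u = R.sig u := by
  rw [lcaBar, sigmaBar_of_isLeaf hu, lca_singleton]

theorem not_isDupHGT_iff (u : V) :
    ¬ R.IsDupHGT u ↔ R.t u = Event.spec ∨ R.t u = Event.leaf := by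
  cases h : R.t u <;> simp [IsDupHGT, h]

theorem not_isLeaf_lcaBar_of_spec (hS1 : R.Sigma1) (hne : ∀ u, (R.sigmaBar u).Nonempty)
    (hu : R.t u = Event.spec) : ¬ R.S.IsLeaf (R.lcaBar u) := by
  obtain ⟨v, w, -, hv, hw, -, -, hdisj⟩ := hS1 u hu
  have hchild : ∀ c, R.T.par c = u → R.sigmaBar c ⊆ R.sigmaBar u := by
    rintro c rfl
    refine sigmaBar_mono (fanc_par fun hc => ?_)
    simp [R.trans_hgt c hc] at hu
  intro hleaf
  have heq : ∀ x ∈ R.sigmaBar u, x = R.lcaBar u :=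
    fun x hx => hleaf.eq_of_anc (anc_lcaBar hne hx)
  obtain ⟨x, hx⟩ := hne v
  obtain ⟨x', hx'⟩ := hne w
  have hxx' : x = x' := (heq x (hchild v hv hx)).trans (heq x' (hchild w hw hx')).symm
  have hmem : x ∈ R.sigmaBar v ∩ R.sigmaBar w := ⟨hx, hxx' ▸ hx'⟩
  rw [hdisj] at hmem
  exact hmem

theorem extLE.anc_lowPt {p q : W ⊕ W} (h : R.extLE p q) : R.S.anc (lowPt p) (lowPt q) := by
  rcases p with a | a <;> rcases q with b | b
  · exact h
  · exact h
  · exact anc_trans (R.S.anc_par a) h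
  · exact h

theorem extLE_or_extLE_of_anc_lowPt {p q : W ⊕ W} (h : R.S.anc (lowPt p) (lowPt q)) :
    R.extLE p q ∨ R.extLE q p := by
  rcases p with a | a <;> rcases q with b | b
  · exact Or.inl h
  · exact Or.inl h
  · rcases eq_or_ne a b with rfl | hne
    · exact Or.inr (R.S.anc_refl a)
    · exact Or.inl (anc_par_of_anc_of_ne h hne)
  · exact Or.inl h

theorem incomp_of_not_anc_lowPt {p q : W ⊕ W} (h₁ : ¬ R.S.anc (lowPt p) (lowPt q))
    (h₂ : ¬ R.S.anc (lowPt q) (lowPt p)) : R.incomp p q :=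
  ⟨fun h => h₁ h.anc_lowPt, fun h => h₂ h.anc_lowPt⟩

section IsRecon

variable {ν : V → W ⊕ W}

theorem IsRecon.eq_inl_lcaBar (hν : R.IsRecon ν) (hu : ¬ R.IsDupHGT u) :
    ν u = Sum.inl (R.lcaBar u) := by
  rcases (R.not_isDupHGT_iff u).mp hu with hs | hl
  · exact hν.2.1 u hs
  · have hl := (R.leaf_iff u).mpr hl
    rw [hν.1 u hl, lcaBar_of_isLeaf hl]

theorem IsRecon.lcaBar_anc_lowPt (hν : R.IsRecon ν) (hne : ∀ u, (R.sigmaBar u).Nonempty)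
    (u : V) :
    R.S.anc (R.lcaBar u) (lowPt (ν u)) := by
  refine lcaBar_anc hne ?_
  rintro _ ⟨l, ⟨hl, hlu⟩, rfl⟩
  rcases eq_or_ne l u with rfl | hlu'
  · rw [hν.1 l hl]
    exact R.S.anc_refl _
  · have hnd : ¬ (R.IsDupHGT l ∧ R.IsDupHGT u) :=
      fun h => (R.not_isDupHGT_iff l).mpr (Or.inr ((R.leaf_iff l).mp hl)) h.1
    have h := ((hν.2.2.2.2 l u ⟨hlu, hlu'⟩).2 hnd).1.anc_lowPt
    rwa [hν.1 l hl] at h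

theorem IsRecon.false_of_anc_lowPt (hν : R.IsRecon ν) (hv : v ∈ R.trans)
    (h₁ : R.S.anc x (lowPt (ν (R.T.par v)))) (h₂ : R.S.anc x (lowPt (ν v))) : False := by
  have hinc := hν.2.2.2.1 v hv
  rcases anc_total h₁ h₂ with h | h
  · exact (extLE_or_extLE_of_anc_lowPt h).elim hinc.1 hinc.2
  · exact (extLE_or_extLE_of_anc_lowPt h).elim hinc.2 hinc.1

theorem IsRecon.lcaBar_ne_root (hν : R.IsRecon ν) (hne : ∀ u, (R.sigmaBar u).Nonempty)
    (hu : R.IsDupHGT u) : R.lcaBar u ≠ R.S.root := by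
  obtain ⟨y, hy, hνu⟩ := hν.2.2.1 u hu
  intro h
  have h' := hν.lcaBar_anc_lowPt hne u
  rw [h, hνu] at h'
  exact hy (eq_root_of_root_anc h')

theorem IsRecon.lcaBar_ne_root_of_mem_trans (hν : R.IsRecon ν)
    (hne : ∀ u, (R.sigmaBar u).Nonempty)
    (hv : v ∈ R.trans) : R.lcaBar v ≠ R.S.root := fun h =>
  hν.false_of_anc_lowPt hv (hν.lcaBar_anc_lowPt hne (R.T.par v))
    (anc_trans (h ▸ R.S.anc_root _) (hν.lcaBar_anc_lowPt hne v))

end IsRecon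

/-- `s` is a time on the vertex `inl x`, or strictly inside the edge `inr y`, of `S`. -/
def AtTime (R : ReconSetup V W) (τS : W → ℝ) : W ⊕ W → ℝ → Prop
  | Sum.inl x, s => s = τS x
  | Sum.inr y, s => τS (R.S.par y) < s ∧ s < τS y

section AtTime

variable {τS : W → ℝ} {p q : W ⊕ W} {s s' : ℝ}

theorem AtTime.le_lowPt (h : R.AtTime τS p s) : s ≤ τS (lowPt p) := by
  rcases p with x | y
  · exact h.le
  · exact h.2.le

theorem AtTime.extLE (hτS : R.S.IsTimeMap τS) (hp : R.AtTime τS p s) (hq : R.AtTime τS q s')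
    (hzp : R.S.anc z (lowPt p)) (hzq : R.S.anc z (lowPt q)) (hle : s' ≤ s) : R.extLE p q := by
  rcases p with x | y <;> rcases q with x' | y' <;> simp only [AtTime] at hp hq
  · exact hτS.anc_of_le hzp hzq (by linarith)
  · exact hτS.anc_of_par_lt hzp hzq (by linarith)
  · have hyx' : R.S.anc y x' := hτS.anc_of_le hzp hzq (by linarith)
    refine anc_par_of_anc_of_ne hyx' ?_
    rintro rfl
    linarith
  · exact hτS.anc_of_par_lt hzp hzq (by linarith)

theorem AtTime.le_of_extLE (hτS : R.S.IsTimeMap τS) (hp : R.AtTime τS p s)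
    (hq : R.AtTime τS q s') (h : R.extLE q p)
    (hvert : (∃ x, q = Sum.inl x) ∨ ∃ x, p = Sum.inl x) : s ≤ s' := by
  rcases p with x | y <;> rcases q with x' | y' <;> simp only [AtTime] at hp hq
  · have := hτS.le_of_anc (show R.S.anc x' x from h)
    linarith
  · have := hτS.le_of_anc (show R.S.anc (R.S.par y') x from h)
    linarith
  · have := hτS.le_of_anc (show R.S.anc x' y from h)
    linarith
  · simp at hvert

end AtTime

theorem IsRecon.atTime_of_c1_c2 {ν : V → W ⊕ W} {τT : V → ℝ} {τS : W → ℝ}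
    (hν : R.IsRecon ν)
    (h₁ : R.C1 ν τT τS) (h₂ : R.C2 ν τT τS) (u : V) : R.AtTime τS (ν u) (τT u) := by
  by_cases hu : R.IsDupHGT u
  · obtain ⟨y, -, hy⟩ := hν.2.2.1 u hu
    rw [hy]
    exact h₂ u y hu hy
  · rw [hν.eq_inl_lcaBar hu]
    exact h₁ u _ ((R.not_isDupHGT_iff u).mp hu) (hν.eq_inl_lcaBar hu)

theorem c1_of_atTime {ν : V → W ⊕ W} {τT : V → ℝ} {τS : W → ℝ}
    (h : ∀ u, R.AtTime τS (ν u) (τT u)) : R.C1 ν τT τS := fun u x _ hx => by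
  have hu := h u
  rw [hx] at hu
  exact hu

theorem c2_of_atTime {ν : V → W ⊕ W} {τT : V → ℝ} {τS : W → ℝ}
    (h : ∀ u, R.AtTime τS (ν u) (τT u)) : R.C2 ν τT τS := fun u y _ hy => by
  have hu := h u
  rw [hy] at hu
  exact hu

def T1 (R : ReconSetup V W) (μ : V → W ⊕ W) (τT : V → ℝ) : Prop :=
  ∀ u v, (R.t u = Event.spec ∨ R.t u = Event.leaf) → R.t u = R.t v →
    ((μ u = μ v → τT u = τT v) ∧ (R.extLT (μ u) (μ v) → τT v < τT u))

def T2 (R : ReconSetup V W) (μ : V → W ⊕ W) (τT : V → ℝ) : Prop :=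
  ∀ u v, (R.t u = Event.spec ∨ R.t u = Event.leaf) → R.IsDupHGT v →
    R.extLE (μ u) (Sum.inl (R.lcaBar v)) → τT v < τT u

def T3 (R : ReconSetup V W) (τT : V → ℝ) : Prop :=
  ∀ v w, v ∈ R.trans → R.S.anc (R.transferLca v) (R.lcaBar w) → τT w < τT (R.T.par v)

section Necessity

variable {μ ν : V → W ⊕ W} {τT : V → ℝ} {τS : W → ℝ}

theorem IsRecon.time_eq_of_atTime (hν : R.IsRecon ν) (hat : ∀ u, R.AtTime τS (ν u) (τT u))
    (hu : ¬ R.IsDupHGT u) : τT u = τS (R.lcaBar u) := by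
  have h := hat u
  rw [hν.eq_inl_lcaBar hu] at h
  exact h

theorem IsRecon.t1_of_atTime (hμ : R.IsRecon μ) (hν : R.IsRecon ν) (hτS : R.S.IsTimeMap τS)
    (hat : ∀ u, R.AtTime τS (ν u) (τT u)) : R.T1 μ τT := by
  intro u v hu huv
  have hu' := (R.not_isDupHGT_iff u).mpr hu
  have hv' := (R.not_isDupHGT_iff v).mpr (by rwa [← huv])
  rw [hμ.eq_inl_lcaBar hu', hμ.eq_inl_lcaBar hv', hν.time_eq_of_atTime hat hu',
    hν.time_eq_of_atTime hat hv']
  refine ⟨fun h => by rw [Sum.inl.inj h], fun h => hτS _ _ ⟨h.1, fun he => h.2 ?_⟩⟩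
  rw [he]
  exact R.S.anc_refl _

theorem IsRecon.t2_of_atTime (hμ : R.IsRecon μ) (hν : R.IsRecon ν)
    (hne : ∀ u, (R.sigmaBar u).Nonempty) (hτS : R.S.IsTimeMap τS)
    (hat : ∀ u, R.AtTime τS (ν u) (τT u)) : R.T2 μ τT := by
  intro u v hu hv huv
  have hu' := (R.not_isDupHGT_iff u).mpr hu
  obtain ⟨y, -, hy⟩ := hν.2.2.1 v hv
  have hv_at := hat v
  have hvy := hν.lcaBar_anc_lowPt hne v
  rw [hy] at hv_at hvy
  rw [hμ.eq_inl_lcaBar hu'] at huv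
  calc τT v < τS y := hv_at.2
    _ ≤ τS (R.lcaBar v) := hτS.le_of_anc hvy
    _ ≤ τS (R.lcaBar u) := hτS.le_of_anc huv
    _ = τT u := (hν.time_eq_of_atTime hat hu').symm

theorem IsRecon.t3_of_atTime (hν : R.IsRecon ν) (hne : ∀ u, (R.sigmaBar u).Nonempty)
    (hτS : R.S.IsTimeMap τS) (hat : ∀ u, R.AtTime τS (ν u) (τT u)) : R.T3 τT := by
  intro v w hv hvw
  obtain ⟨y, -, hy⟩ := hν.2.2.1 _ (Or.inr (R.trans_hgt v hv))
  have hp_at := hat (R.T.par v)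
  have hpy := hν.lcaBar_anc_lowPt hne (R.T.par v)
  rw [hy] at hp_at hpy
  have hzy : ¬ R.S.anc (R.transferLca v) y := fun h =>
    hν.false_of_anc_lowPt hv (by rw [hy]; exact anc_trans (lcaBar_anc_transferLca hne v) h)
      (hν.lcaBar_anc_lowPt hne v)
  have hyz : R.S.anc y (R.transferLca v) :=
    (anc_total hpy (lcaBar_par_anc_transferLca hne v)).resolve_right hzy
  have hpar : R.S.anc (R.S.par y) (R.transferLca v) :=
    anc_par_of_anc_of_ne hyz fun h => hzy (h ▸ R.S.anc_refl y)
  calc τT w ≤ τS (lowPt (ν w)) := (hat w).le_lowPt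
    _ ≤ τS (R.lcaBar w) := hτS.le_of_anc (hν.lcaBar_anc_lowPt hne w)
    _ ≤ τS (R.transferLca v) := hτS.le_of_anc hvw
    _ ≤ τS (R.S.par y) := hτS.le_of_anc hpar
    _ < τT (R.T.par v) := hp_at.1

end Necessity

/-- The gene vertices whose time (T1)-(T3) force to be at least that of the species `x`. -/
def eventsBelow (R : ReconSetup V W) (x : W) : Set V :=
  {w | (R.t w = Event.spec ∧ R.S.anc (R.lcaBar w) x) ∨
    ∃ v ∈ R.trans, R.T.par v = w ∧ R.S.anc (R.transferLca v) x}

theorem eventsBelow_mono (h : R.S.anc x y) : R.eventsBelow x ⊆ R.eventsBelow y := by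
  rintro w (⟨hw, hwx⟩ | ⟨v, hv, hvw, hvx⟩)
  · exact Or.inl ⟨hw, anc_trans hwx h⟩
  · exact Or.inr ⟨v, hv, hvw, anc_trans hvx h⟩

open Classical in
noncomputable def speciesPotential [Finite V] (R : ReconSetup V W) (τ : V → ℝ) (x : W) :
    EReal :=
  if x = R.S.root then ⊥
  else (Set.toFinite (R.eventsBelow x)).toFinset.inf fun w => (τ w : EReal)

noncomputable def nodePotential [Finite V] (R : ReconSetup V W) (τ : V → ℝ) :
    V ⊕ W → EReal ×ₗ WithTop ℕ :=
  Sum.elim (fun u => toLex ((τ u : EReal), ⊤))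
    fun x => toLex (R.speciesPotential τ x, ({y | R.S.anc x y}.ncard : WithTop ℕ))

open Classical in
noncomputable def geneNode (R : ReconSetup V W) (u : V) : V ⊕ W :=
  if R.IsDupHGT u then Sum.inl u else Sum.inr (R.lcaBar u)

theorem lt_of_mem_eventsBelow_lcaBar {μ : V → W ⊕ W} {τ : V → ℝ} (hμ : R.IsRecon μ)
    (hne : ∀ u, (R.sigmaBar u).Nonempty)
    (hS1 : R.Sigma1) (hτ : R.T.IsTimeMap τ) (h1 : R.T1 μ τ) (h2 : R.T2 μ τ) (h3 : R.T3 τ)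
    (hc : v ≠ R.T.root) (hpv : R.IsDupHGT (R.T.par v)) (hv : ¬ R.IsDupHGT v)
    (hw : w ∈ R.eventsBelow (R.lcaBar v)) : τ (R.T.par v) < τ w := by
  by_cases hvt : v ∈ R.trans
  · -- (T2) does not reach across the transfer edge, so compare `w` with `v` itself
    refine (hτ v _ ⟨R.T.anc_par v, (R.T.par_ne v hc).symm⟩).trans_le ?_
    rcases hw with ⟨hws, hwv⟩ | ⟨v', hv', rfl, hv'v⟩
    · rcases (R.not_isDupHGT_iff v).mp hv with hvs | hvl
      · have h1' := h1 w v (Or.inl hws) (hws.trans hvs.symm)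
        rw [hμ.eq_inl_lcaBar ((R.not_isDupHGT_iff w).mpr (Or.inl hws)),
          hμ.eq_inl_lcaBar hv] at h1'
        rcases eq_or_ne (R.lcaBar w) (R.lcaBar v) with he | hne'
        · exact (h1'.1 (by rw [he])).ge
        · exact (h1'.2 ⟨hwv, fun h => hne' (anc_antisymm hwv h)⟩).le
      · have hvl := (R.leaf_iff v).mpr hvl
        have hleaf : R.S.IsLeaf (R.lcaBar v) := by
          rw [lcaBar_of_isLeaf hvl]
          exact R.sig_leaf v hvl
        refine absurd ?_ (not_isLeaf_lcaBar_of_spec hS1 hne hws)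
        rw [hleaf.eq_of_anc hwv]
        exact hleaf
    · exact (h3 v' v hv' hv'v).le
  · have hmono := lcaBar_mono hne (fanc_par hvt)
    rcases hw with ⟨hws, hwv⟩ | ⟨v', hv', rfl, hv'v⟩
    · refine h2 w _ (Or.inl hws) hpv ?_
      rw [hμ.eq_inl_lcaBar ((R.not_isDupHGT_iff w).mpr (Or.inl hws))]
      exact anc_trans hwv hmono
    · exact h3 v' _ hv' (anc_trans hv'v hmono)

section Potential

variable [Finite V] {μ : V → W ⊕ W} {τ : V → ℝ} {s : ℝ}

theorem speciesPotential_root (τ : V → ℝ) : R.speciesPotential τ R.S.root = ⊥ := if_pos rfl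

theorem speciesPotential_le (hw : w ∈ R.eventsBelow x) : R.speciesPotential τ x ≤ τ w := by
  unfold speciesPotential
  split_ifs
  · exact bot_le
  · exact Finset.inf_le ((Set.toFinite _).mem_toFinset.mpr hw)

theorem lt_speciesPotential (hx : x ≠ R.S.root) (h : ∀ w ∈ R.eventsBelow x, s < τ w) :
    (s : EReal) < R.speciesPotential τ x := by
  rw [speciesPotential, if_neg hx, Finset.lt_inf_iff (EReal.coe_lt_top s)]
  exact fun w hw => EReal.coe_lt_coe_iff.mpr (h w ((Set.toFinite _).mem_toFinset.mp hw))

theorem speciesPotential_anti (h : R.S.anc x y) :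
    R.speciesPotential τ y ≤ R.speciesPotential τ x := by
  by_cases hy : y = R.S.root
  · rw [hy, speciesPotential_root]
    exact bot_le
  have hx : x ≠ R.S.root := fun hx => hy (eq_root_of_root_anc (hx ▸ h))
  rw [speciesPotential, speciesPotential, if_neg hx, if_neg hy]
  exact Finset.inf_mono (Set.Finite.toFinset_subset_toFinset.mpr (eventsBelow_mono h))

theorem nodePotential_inr_lt [Finite W] (h : R.S.sanc x y) :
    R.nodePotential τ (Sum.inr y) < R.nodePotential τ (Sum.inr x) :=
  Prod.Lex.toLex_lt_toLex'.mpr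
    ⟨speciesPotential_anti h.1, fun _ => WithTop.coe_lt_coe.mpr (ncard_anc_lt h)⟩

theorem nodePotential_root_lt (u : V) :
    R.nodePotential τ (Sum.inr R.S.root) < R.nodePotential τ (Sum.inl u) := by
  refine Prod.Lex.toLex_lt_toLex.mpr (Or.inl ?_)
  change R.speciesPotential τ R.S.root < τ u
  rw [speciesPotential_root]
  exact EReal.bot_lt_coe _

theorem nodePotential_transferLca_lt (hv : v ∈ R.trans) :
    R.nodePotential τ (Sum.inr (R.transferLca v)) < R.nodePotential τ (Sum.inl (R.T.par v)) :=
  Prod.Lex.toLex_lt_toLex'.mpr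
    ⟨speciesPotential_le (Or.inr ⟨v, hv, rfl, R.S.anc_refl _⟩),
      fun _ => WithTop.coe_lt_top _⟩

theorem nodePotential_lt_lcaBar (hμ : R.IsRecon μ) (hne : ∀ u, (R.sigmaBar u).Nonempty)
    (h2 : R.T2 μ τ) (h3 : R.T3 τ) (hu : R.IsDupHGT u) :
    R.nodePotential τ (Sum.inl u) < R.nodePotential τ (Sum.inr (R.lcaBar u)) := by
  refine Prod.Lex.toLex_lt_toLex.mpr (Or.inl (lt_speciesPotential (hμ.lcaBar_ne_root hne hu) ?_))
  rintro w (⟨hw, hwu⟩ | ⟨v, hv, rfl, hvu⟩)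
  · refine h2 w u (Or.inl hw) hu ?_
    rw [hμ.eq_inl_lcaBar ((R.not_isDupHGT_iff w).mpr (Or.inl hw))]
    exact hwu
  · exact h3 v u hv hvu

theorem nodePotential_geneNode_lt [Finite W] (hμ : R.IsRecon μ)
    (hne : ∀ u, (R.sigmaBar u).Nonempty) (hS1 : R.Sigma1) (hτ : R.T.IsTimeMap τ)
    (h1 : R.T1 μ τ) (h2 : R.T2 μ τ) (h3 : R.T3 τ) (hc : v ≠ R.T.root) :
    R.nodePotential τ (R.geneNode (R.T.par v)) < R.nodePotential τ (R.geneNode v) := by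
  have hvlt : τ (R.T.par v) < τ v := hτ v _ ⟨R.T.anc_par v, (R.T.par_ne v hc).symm⟩
  unfold geneNode
  split_ifs with hpv hv hv
  · exact Prod.Lex.toLex_lt_toLex.mpr (Or.inl (EReal.coe_lt_coe_iff.mpr hvlt))
  · have hvr : R.lcaBar v ≠ R.S.root := by
      by_cases hvt : v ∈ R.trans
      · exact hμ.lcaBar_ne_root_of_mem_trans hne hvt
      · exact fun h => hμ.lcaBar_ne_root hne hpv
          (eq_root_of_root_anc (h ▸ lcaBar_mono hne (fanc_par hvt)))
    exact Prod.Lex.toLex_lt_toLex.mpr (Or.inl (lt_speciesPotential hvr fun w hw =>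
      lt_of_mem_eventsBelow_lcaBar hμ hne hS1 hτ h1 h2 h3 hc hpv hv hw))
  · have hps : R.t (R.T.par v) = Event.spec :=
      ((R.not_isDupHGT_iff _).mp hpv).resolve_right
        fun h => not_isLeaf_par hc ((R.leaf_iff _).mpr h)
    refine Prod.Lex.toLex_lt_toLex.mpr (Or.inl ?_)
    exact (speciesPotential_le (Or.inl ⟨hps, R.S.anc_refl _⟩)).trans_lt
      (EReal.coe_lt_coe_iff.mpr hvlt)
  · have hvt : v ∉ R.trans := fun h => hpv (Or.inr (R.trans_hgt v h))
    have hM3 := (hμ.2.2.2.2 v _ ⟨fanc_par hvt, (R.T.par_ne v hc).symm⟩).2 fun h => hv h.1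
    rw [hμ.eq_inl_lcaBar hv, hμ.eq_inl_lcaBar hpv] at hM3
    refine nodePotential_inr_lt ⟨hM3.1, fun he => hM3.2 ?_⟩
    rw [he]
    exact R.S.anc_refl _

end Potential

open Classical in
noncomputable def placeAt (R : ReconSetup V W) (Y : V → W) (u : V) : W ⊕ W :=
  if R.IsDupHGT u then Sum.inr (Y u) else Sum.inl (R.lcaBar u)

section PlaceAt

variable {Y : V → W} {τ : V → ℝ} {τS : W → ℝ}

theorem placeAt_of_isDupHGT (hu : R.IsDupHGT u) : R.placeAt Y u = Sum.inr (Y u) := if_pos hu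

theorem placeAt_of_not_isDupHGT (hu : ¬ R.IsDupHGT u) : R.placeAt Y u = Sum.inl (R.lcaBar u) :=
  if_neg hu

theorem lcaBar_anc_lowPt_placeAt (hY : ∀ u, R.IsDupHGT u → R.S.anc (R.lcaBar u) (Y u)) (u : V) :
    R.S.anc (R.lcaBar u) (lowPt (R.placeAt Y u)) := by
  by_cases hu : R.IsDupHGT u
  · rw [placeAt_of_isDupHGT hu]
    exact hY u hu
  · rw [placeAt_of_not_isDupHGT hu]
    exact R.S.anc_refl _

theorem m2iii_placeAt (hne : ∀ u, (R.sigmaBar u).Nonempty) (hτS : R.S.IsTimeMap τS)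
    (hτ : R.T.IsTimeMap τ) (hY : ∀ u, R.IsDupHGT u → R.S.anc (R.lcaBar u) (Y u))
    (hat : ∀ u, R.AtTime τS (R.placeAt Y u) (τ u))
    (hZ : ∀ v ∈ R.trans, τS (R.transferLca v) < τ (R.T.par v)) : R.M2iii (R.placeAt Y) := by
  intro v hv
  have hbound : ∀ y, R.S.anc (R.lcaBar (R.T.par v)) y → R.S.anc (R.lcaBar v) y →
      τS y < τ (R.T.par v) :=
    fun y h₁ h₂ => (hτS.le_of_anc (transferLca_anc hne h₁ h₂)).trans_lt (hZ v hv)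
  have hp := (hat (R.T.par v)).le_lowPt
  have hq := (hτ v _ ⟨R.T.anc_par v, (R.T.par_ne v (R.trans_ne_root v hv)).symm⟩).trans_le
    (hat v).le_lowPt
  have ep := lcaBar_anc_lowPt_placeAt hY (R.T.par v)
  have eq := lcaBar_anc_lowPt_placeAt hY v
  refine incomp_of_not_anc_lowPt (fun h => ?_) (fun h => ?_)
  · exact (hbound _ (anc_trans ep h) eq).not_gt hq
  · exact (hbound _ ep (anc_trans eq h)).not_ge hp

theorem m3_placeAt (hne : ∀ u, (R.sigmaBar u).Nonempty) (hτS : R.S.IsTimeMap τS)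
    (hτ : R.T.IsTimeMap τ) (hY : ∀ u, R.IsDupHGT u → R.S.anc (R.lcaBar u) (Y u))
    (hat : ∀ u, R.AtTime τS (R.placeAt Y u) (τ u)) : R.M3 (R.placeAt Y) := by
  intro v w hvw
  have hlt : τ w < τ v := hτ v w ⟨anc_of_fanc hvw.1, hvw.2⟩
  have hle : R.extLE (R.placeAt Y v) (R.placeAt Y w) :=
    (hat v).extLE hτS (hat w) (lcaBar_anc_lowPt_placeAt hY v)
      (anc_trans (lcaBar_mono hne hvw.1) (lcaBar_anc_lowPt_placeAt hY w)) hlt.le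
  refine ⟨fun _ => hle, fun hnd => ⟨hle, fun h => ?_⟩⟩
  refine ((hat v).le_of_extLE hτS (hat w) h ?_).not_gt hlt
  rcases not_and_or.mp hnd with hv | hw
  · exact Or.inr ⟨_, placeAt_of_not_isDupHGT hv⟩
  · exact Or.inl ⟨_, placeAt_of_not_isDupHGT hw⟩

theorem isRecon_placeAt (hne : ∀ u, (R.sigmaBar u).Nonempty) (hτS : R.S.IsTimeMap τS)
    (hτ : R.T.IsTimeMap τ)
    (hY : ∀ u, R.IsDupHGT u → R.S.anc (R.lcaBar u) (Y u) ∧ Y u ≠ R.S.root)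
    (hat : ∀ u, R.AtTime τS (R.placeAt Y u) (τ u))
    (hZ : ∀ v ∈ R.trans, τS (R.transferLca v) < τ (R.T.par v)) : R.IsRecon (R.placeAt Y) := by
  have hY' := fun u hu => (hY u hu).1
  refine ⟨fun u hu => ?_, fun u hu => ?_,
    fun u hu => ⟨Y u, (hY u hu).2, placeAt_of_isDupHGT hu⟩,
    m2iii_placeAt hne hτS hτ hY' hat hZ, m3_placeAt hne hτS hτ hY' hat⟩
  · rw [placeAt_of_not_isDupHGT ((R.not_isDupHGT_iff u).mpr (Or.inr ((R.leaf_iff u).mp hu))),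
      lcaBar_of_isLeaf hu]
  · exact placeAt_of_not_isDupHGT ((R.not_isDupHGT_iff u).mpr (Or.inl hu))

end PlaceAt

theorem exists_timeConsistent [Finite V] [Finite W] {μ : V → W ⊕ W} {τ : V → ℝ}
    (hμ : R.IsRecon μ) (hne : ∀ u, (R.sigmaBar u).Nonempty) (hS1 : R.Sigma1)
    (hτ : R.T.IsTimeMap τ) (h1 : R.T1 μ τ) (h2 : R.T2 μ τ) (h3 : R.T3 τ) :
    ∃ μ', R.IsRecon μ' ∧ R.TimeConsistent μ' := by
  obtain ⟨g, hg_inj, hg⟩ := exists_injective_real_ranking (R.nodePotential τ)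
  set τS : W → ℝ := fun x => g (Sum.inr x)
  set τ' : V → ℝ := fun u => g (R.geneNode u)
  have hτS : R.S.IsTimeMap τS := isTimeMap_of_par_lt fun x hx =>
    hg _ _ (nodePotential_inr_lt ⟨R.S.anc_par x, (R.S.par_ne x hx).symm⟩)
  have hτ' : R.T.IsTimeMap τ' := isTimeMap_of_par_lt fun v hv =>
    hg _ _ (nodePotential_geneNode_lt hμ hne hS1 hτ h1 h2 h3 hv)
  have hdup : ∀ u, R.IsDupHGT u → τ' u = g (Sum.inl u) := fun u hu => by
    simp only [τ', geneNode, if_pos hu]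
  have hY : ∀ u, ∃ y, R.IsDupHGT u →
      R.S.anc (R.lcaBar u) y ∧ y ≠ R.S.root ∧ τS (R.S.par y) < τ' u ∧ τ' u < τS y := by
    intro u
    by_cases hu : R.IsDupHGT u
    · obtain ⟨y, hy⟩ := exists_edge_of_lt (T := R.S) (τ := τS) (s := τ' u) (R.lcaBar u)
        (by rw [hdup u hu]; exact hg _ _ (nodePotential_root_lt u))
        (by rw [hdup u hu]; exact hg _ _ (nodePotential_lt_lcaBar hμ hne h2 h3 hu))
        fun y => by rw [hdup u hu]; exact hg_inj.ne Sum.inr_ne_inl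
      exact ⟨y, fun _ => hy⟩
    · exact ⟨R.S.root, fun h => absurd h hu⟩
  choose Y hY using hY
  have hat : ∀ u, R.AtTime τS (R.placeAt Y u) (τ' u) := by
    intro u
    by_cases hu : R.IsDupHGT u
    · rw [placeAt_of_isDupHGT hu]
      exact (hY u hu).2.2
    · rw [placeAt_of_not_isDupHGT hu]
      simp only [AtTime, τ', τS, geneNode, if_neg hu]
  have hZ : ∀ v ∈ R.trans, τS (R.transferLca v) < τ' (R.T.par v) := fun v hv => by
    rw [hdup _ (Or.inr (R.trans_hgt v hv))]
    exact hg _ _ (nodePotential_transferLca_lt hv)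
  exact ⟨R.placeAt Y, isRecon_placeAt hne hτS hτ' (fun u hu => ⟨(hY u hu).1, (hY u hu).2.1⟩)
    hat hZ, τ', τS, hτ', hτS, c1_of_atTime hat, c2_of_atTime hat⟩

end ReconSetup

theorem stmt15_general {V W : Type*} [Fintype V] [Fintype W]
    (R : ReconSetup V W) (μ : V → W ⊕ W) (hrec : R.IsRecon μ)
    (hO1 : R.O1) (hO2 : R.O2) (hS1 : R.Sigma1) :
    (∃ μ', R.IsRecon μ' ∧ R.TimeConsistent μ') ↔
    ∃ τT : V → ℝ, R.T.IsTimeMap τT ∧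
      (∀ u v, (R.t u = Event.spec ∨ R.t u = Event.leaf) → R.t u = R.t v →
        ((μ u = μ v → τT u = τT v) ∧ (R.extLT (μ u) (μ v) → τT v < τT u))) ∧
      (∀ u v, (R.t u = Event.spec ∨ R.t u = Event.leaf) → R.IsDupHGT v →
        R.extLE (μ u) (Sum.inl (R.lca (R.sigmaBar v))) → τT v < τT u) ∧
      (∀ v w, v ∈ R.trans →
        R.S.anc (R.lca (R.sigmaBar (R.T.par v) ∪ R.sigmaBar v))
                (R.lca (R.sigmaBar w)) → τT w < τT (R.T.par v)) := by
  have hne := R.sigmaBar_nonempty hO1 hO2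
  constructor
  · rintro ⟨ν, hν, τT, τS, hτT, hτS, hC1, hC2⟩
    have hat := hν.atTime_of_c1_c2 hC1 hC2
    exact ⟨τT, hτT, hrec.t1_of_atTime hν hτS hat, hrec.t2_of_atTime hν hne hτS hat,
      hν.t3_of_atTime hne hτS hat⟩
  · rintro ⟨τT, hτT, h1, h2, h3⟩
    exact ReconSetup.exists_timeConsistent hrec hne hS1 hτT h1 h2 h3

/-- given a reconciliation map `μ`, there is a time-consistent
reconciliation map from `(T;t,σ)` to `S` iff there is a time map `τ_T` on the
gene tree alone satisfying (T1), (T2), (T3). -/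
theorem stmt15 {V W : Type*} [Fintype V] [Fintype W]
    (R : ReconSetup V W) (μ : V → W ⊕ W) (hrec : R.IsRecon μ)
    (hO1 : R.O1) (hO2 : R.O2) (hS1 : R.Sigma1) (hS2 : R.Sigma2) :
    (∃ μ', R.IsRecon μ' ∧ R.TimeConsistent μ') ↔
    ∃ τT : V → ℝ, R.T.IsTimeMap τT ∧
      (∀ u v, (R.t u = Event.spec ∨ R.t u = Event.leaf) → R.t u = R.t v →
        ((μ u = μ v → τT u = τT v) ∧ (R.extLT (μ u) (μ v) → τT v < τT u))) ∧
      (∀ u v, (R.t u = Event.spec ∨ R.t u = Event.leaf) → R.IsDupHGT v →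
        R.extLE (μ u) (Sum.inl (R.lca (R.sigmaBar v))) → τT v < τT u) ∧
      (∀ v w, v ∈ R.trans →
        R.S.anc (R.lca (R.sigmaBar (R.T.par v) ∪ R.sigmaBar v))
                (R.lca (R.sigmaBar w)) → τT w < τT (R.T.par v)) :=
  stmt15_general R μ hrec hO1 hO2 hS1
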